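/- arXiv:1507.04786 — 2 statements merged into one kernel-verified Lean document; each statement's English description precedes it below -/
import Mathlib

section
/- The Legendre transform of the log-moment generating function of a geometric distribution of mean ρ is given explicitly by: for a > 0, sup_{λ∈ℝ} { λa − log M_ρ(λ) } = a·log( a(1+ρ) / (ρ(1+a)) ) − log( (1+a)/(1+ρ) ), where M_ρ(λ) = 1/(1 − ρ(e^λ − 1)) for λ < log((1+ρ)/ρ) and +∞ otherwise. -/
/-!
The substitution `t = ρ e^λ / (1 + ρ)` maps the domain `λ < log ((1 + ρ) / ρ)` onto `0 < t < 1`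
and turns `λ a - log M_ρ(λ)` into `a log t + log (1 - t)` plus a constant. By the two-point
Gibbs inequality the latter is maximal at `t = a / (1 + a)`, which gives the stated value.
-/

open Real

/-- Gibbs' inequality for the weights `(a, 1) / (1 + a)`. -/
theorem mul_log_add_log_one_sub_le {a t : ℝ} (ha : 0 < a) (ht₀ : 0 < t) (ht₁ : t < 1) :
    a * log t + log (1 - t) ≤ a * log (a / (1 + a)) + log (1 / (1 + a)) := by
  have ha₁ : 0 < 1 + a := by linarith
  have h₁ := log_le_sub_one_of_pos (x := t / (a / (1 + a))) (by positivity)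
  have h₂ := log_le_sub_one_of_pos (x := (1 - t) / (1 / (1 + a))) (div_pos (by linarith) (by positivity))
  rw [log_div ht₀.ne' (by positivity)] at h₁
  rw [log_div (by linarith) (by positivity)] at h₂
  have h₁' : a * (t / (a / (1 + a)) - 1) = t * (1 + a) - a := by field_simp
  have h₂' : (1 - t) / (1 / (1 + a)) - 1 = (1 - t) * (1 + a) - 1 := by field_simp
  nlinarith [mul_le_mul_of_nonneg_left h₁ ha.le]

section Geometric

variable {ρ : ℝ}

theorem geometric_tilt_lt_one (hρ : 0 < ρ) {l : ℝ} (hl : l < log ((1 + ρ) / ρ)) :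
    ρ * exp l / (1 + ρ) < 1 := by
  rw [lt_log_iff_exp_lt (by positivity), lt_div_iff₀ hρ] at hl
  rw [div_lt_one (by linarith)]
  linarith

theorem legendre_geometric_eq (hρ : 0 < ρ) (a : ℝ) {l : ℝ} (hl : l < log ((1 + ρ) / ρ)) :
    l * a - log (1 / (1 - ρ * (exp l - 1))) =
      a * log (ρ * exp l / (1 + ρ)) + log (1 - ρ * exp l / (1 + ρ)) +
        (a * log ((1 + ρ) / ρ) + log (1 + ρ)) := by
  have hρ₁ : 0 < 1 + ρ := by linarith
  have ht₁ := geometric_tilt_lt_one hρ hl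
  have hmgf : 1 - ρ * (exp l - 1) = (1 - ρ * exp l / (1 + ρ)) * (1 + ρ) := by field_simp; ring
  rw [hmgf, one_div, log_inv, log_mul (by linarith) hρ₁.ne',
    log_div (by positivity) hρ₁.ne', log_mul hρ.ne' (exp_pos l).ne', log_exp,
    log_div hρ₁.ne' hρ.ne']
  ring

theorem rate_geometric_eq (hρ : 0 < ρ) {a : ℝ} (ha : 0 < a) :
    a * log (a * (1 + ρ) / (ρ * (1 + a))) - log ((1 + a) / (1 + ρ)) =
      a * log (a / (1 + a)) + log (1 / (1 + a)) + (a * log ((1 + ρ) / ρ) + log (1 + ρ)) := by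
  have ha₁ : 0 < 1 + a := by linarith
  have hρ₁ : 0 < 1 + ρ := by linarith
  have hsplit : a * (1 + ρ) / (ρ * (1 + a)) = a / (1 + a) * ((1 + ρ) / ρ) := by field_simp
  rw [hsplit, log_mul (by positivity) (by positivity), log_div ha₁.ne' hρ₁.ne', one_div, log_inv]
  ring

end Geometric

/-- The Legendre transform of the log-moment generating function of a
geometric distribution of mean ρ: for a > 0,
sup_{λ} { λa − log M_ρ(λ) } = a log(a(1+ρ)/(ρ(1+a))) − log((1+a)/(1+ρ)).
Since M_ρ(λ) = +∞ for λ ≥ log((1+ρ)/ρ) (contributing −∞ to the supremum), the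
supremum is over the domain of finiteness λ < log((1+ρ)/ρ). -/
theorem stmt4 (ρ a : ℝ) (hρ : 0 < ρ) (ha : 0 < a) :
    IsLUB {y : ℝ | ∃ l : ℝ, l < Real.log ((1 + ρ) / ρ) ∧
        y = l * a - Real.log (1 / (1 - ρ * (Real.exp l - 1)))}
      (a * Real.log (a * (1 + ρ) / (ρ * (1 + a))) - Real.log ((1 + a) / (1 + ρ))) := by
  have ha₁ : 0 < 1 + a := by linarith
  set L := log (a * (1 + ρ) / (ρ * (1 + a)))
  have htilt : ρ * exp L / (1 + ρ) = a / (1 + a) := by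
    rw [exp_log (by positivity)]
    field_simp
  have hL : L < log ((1 + ρ) / ρ) := by
    rw [lt_log_iff_exp_lt (by positivity), exp_log (by positivity),
      div_lt_div_iff₀ (by positivity) hρ]
    nlinarith
  refine IsGreatest.isLUB ⟨⟨L, hL, ?_⟩, ?_⟩
  · have h₁ : 1 - a / (1 + a) = 1 / (1 + a) := by field_simp; ring
    rw [legendre_geometric_eq hρ a hL, htilt, h₁, rate_geometric_eq hρ ha]
  · rintro y ⟨l, hl, rfl⟩
    rw [legendre_geometric_eq hρ a hl, rate_geometric_eq hρ ha]
    gcongr ?_ + _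
    exact mul_log_add_log_one_sub_le ha (by positivity) (geometric_tilt_lt_one hρ hl)
end

section
/- Let ρ_n = n/b − 1 and a_n = n/a − 1 with 0 < b < a. Then the geometric rate function evaluated along these sequences converges to the exponential rate function: lim_{n→∞} I_{ρ_n}(a_n) = b/a − log(b/a) − 1, where I_ρ(x) = x log(x(1+ρ)/(ρ(1+x))) − log((1+x)/(1+ρ)). -/
open Filter

lemma nat_mul_log (c : ℝ) :
    Tendsto (fun n : ℕ => (n : ℝ) * Real.log (1 + c / n)) atTop (nhds c) :=
  (Real.tendsto_mul_log_one_add_div_atTop c).comp tendsto_natCast_atTop_atTop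

lemma log_to_zero (c : ℝ) :
    Tendsto (fun n : ℕ => Real.log (1 + c / n)) atTop (nhds 0) := by
  have h1 : Tendsto (fun n : ℕ => 1 + c / (n : ℝ)) atTop (nhds 1) := by
    have := (tendsto_const_div_atTop_nhds_zero_nat c)
    simpa using tendsto_const_nhds.add this
  have := (Real.continuousAt_log (by norm_num : (1:ℝ) ≠ 0)).tendsto.comp h1
  simpa [Function.comp_def] using this

/-- With ρ_n = n/b − 1 and a_n = n/a − 1 (0 < b < a), the geometric rate
function I_{ρ_n}(a_n) converges to the exponential rate function b/a − log(b/a) − 1. -/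
theorem stmt6 (a b : ℝ) (hb : 0 < b) (hab : b < a) :
    Tendsto (fun n : ℕ =>
        ((n : ℝ) / a - 1) *
            Real.log (((n : ℝ) / a - 1) * (1 + ((n : ℝ) / b - 1)) /
              (((n : ℝ) / b - 1) * (1 + ((n : ℝ) / a - 1)))) -
          Real.log ((1 + ((n : ℝ) / a - 1)) / (1 + ((n : ℝ) / b - 1))))
      atTop (nhds (b / a - Real.log (b / a) - 1)) := by
  have ha : 0 < a := hb.trans hab
  -- the simplified function
  set g : ℕ → ℝ := fun n =>
    (1 / a) * ((n : ℝ) * Real.log (1 + (-a) / n)) -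
      (1 / a) * ((n : ℝ) * Real.log (1 + (-b) / n)) -
      (Real.log (1 + (-a) / n) - Real.log (1 + (-b) / n)) - Real.log (b / a) with hg
  have hgt : Tendsto g atTop (nhds (b / a - Real.log (b / a) - 1)) := by
    have t1 : Tendsto (fun n : ℕ => (1 / a) * ((n : ℝ) * Real.log (1 + (-a) / n)))
        atTop (nhds ((1 / a) * (-a))) := (nat_mul_log (-a)).const_mul _
    have t2 : Tendsto (fun n : ℕ => (1 / a) * ((n : ℝ) * Real.log (1 + (-b) / n)))
        atTop (nhds ((1 / a) * (-b))) := (nat_mul_log (-b)).const_mul _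
    have := (((t1.sub t2).sub ((log_to_zero (-a)).sub (log_to_zero (-b)))).sub
        (tendsto_const_nhds : Tendsto (fun _ : ℕ => Real.log (b / a)) atTop _))
    convert this using 2
    field_simp
    ring
  refine hgt.congr' ?_
  filter_upwards [eventually_gt_atTop ⌈a⌉₊] with n hn
  have hna : a < (n : ℝ) := lt_of_le_of_lt (Nat.le_ceil a) (by exact_mod_cast hn)
  have hnb : b < (n : ℝ) := hab.trans hna
  have hn0 : (0 : ℝ) < n := hb.trans hnb
  have hxa : 0 < (n : ℝ) / a - 1 := by
    rw [sub_pos, lt_div_iff₀ ha]; simpa using hna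
  have hxb : 0 < (n : ℝ) / b - 1 := by
    rw [sub_pos, lt_div_iff₀ hb]; simpa using hnb
  have h1a : (0:ℝ) < 1 + (-a) / n := by
    have : a / (n : ℝ) < 1 := (div_lt_one hn0).2 hna
    rw [neg_div]; linarith
  have h1b : (0:ℝ) < 1 + (-b) / n := by
    have : b / (n : ℝ) < 1 := (div_lt_one hn0).2 hnb
    rw [neg_div]; linarith
  have hsb : ((n : ℝ) - b) ≠ 0 := by linarith
  have hsa : ((n : ℝ) - a) ≠ 0 := by linarith
  -- rewrite insides
  have e1 : (1 : ℝ) + ((n : ℝ) / b - 1) = (n : ℝ) / b := by ring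
  have e2 : (1 : ℝ) + ((n : ℝ) / a - 1) = (n : ℝ) / a := by ring
  have key1 : ((n : ℝ) / a - 1) * ((n : ℝ) / b) / (((n : ℝ) / b - 1) * ((n : ℝ) / a))
      = (1 + (-a) / n) / (1 + (-b) / n) := by
    rw [div_eq_div_iff (by positivity) h1b.ne']
    field_simp
    ring
  have key2 : ((n : ℝ) / a) / ((n : ℝ) / b) = b / a := by
    field_simp
  rw [hg]
  simp only [e1, e2, key1, key2]
  rw [Real.log_div h1a.ne' h1b.ne']
  field_simp
end
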